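/- Let Γ be a finite directed graph on Fin n and let N ≥ 1 be divisible by the length of every simple cycle of Γ. Then the normalized closed path polytope p_N(Γ) equals the normalized cycle polytope p_*(Γ). -/

import Mathlib

open Finset in
/-- Count a predicate on `ZMod N` via `Finset.range N`. -/
lemma natCard_zmod_subtype (N : ℕ) [NeZero N] (P : ZMod N → Prop) [DecidablePred P] :
    Nat.card {t : ZMod N // P t}
      = ((Finset.range N).filter fun m : ℕ => P (↑m : ZMod N)).card := by
  classical
  rw [Nat.card_eq_fintype_card, Fintype.card_subtype]
  apply Finset.card_bij (fun t _ => t.val)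
  · intro t ht
    simp only [mem_filter, mem_univ, true_and] at ht ⊢
    exact ⟨Finset.mem_range.mpr t.val_lt, by rwa [ZMod.natCast_zmod_val]⟩
  · intro t _ u _ h
    exact ZMod.val_injective N h
  · intro m hm
    simp only [mem_filter, Finset.mem_range] at hm
    exact ⟨(m : ZMod N), by simp [ZMod.natCast_zmod_val, hm.2], ZMod.val_cast_of_lt hm.1⟩

open Finset in
lemma count_mod_mul (k N : ℕ) (hk : 0 < k) (h : k ∣ N) (P : ZMod k → Prop) [DecidablePred P] :
    ((Finset.range N).filter fun m : ℕ => P (↑m : ZMod k)).card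
      = (N / k) * ((Finset.range k).filter fun r : ℕ => P (↑r : ZMod k)).card := by
  classical
  have hNk : (N / k) * k = N := Nat.div_mul_cancel h
  have key : ((Finset.range N).filter fun m : ℕ => P (↑m : ZMod k)).card
      = ((Finset.range (N/k)) ×ˢ ((Finset.range k).filter fun r : ℕ => P (↑r : ZMod k))).card := by
    apply Finset.card_bij' (fun m _ => (m / k, m % k)) (fun p _ => p.2 + p.1 * k)
    · intro m hm
      simp only [mem_filter, mem_range, Finset.mem_product] at hm ⊢
      obtain ⟨hmN, hP⟩ := hm
      refine ⟨?_, Nat.mod_lt _ hk, ?_⟩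
      · exact Nat.div_lt_div_of_lt_of_dvd h hmN
      · rwa [ZMod.natCast_mod]
    · intro p hp
      simp only [mem_filter, mem_range, Finset.mem_product] at hp ⊢
      obtain ⟨hq, hr, hP⟩ := hp
      constructor
      · have h1 : (p.1 + 1) * k ≤ (N / k) * k := Nat.mul_le_mul_right _ (by omega)
        rw [hNk] at h1
        nlinarith
      · have : ((p.2 + p.1 * k : ℕ) : ZMod k) = (p.2 : ZMod k) := by
          push_cast
          simp [ZMod.natCast_self]
        rwa [this]
    · intro m _
      exact Nat.mod_add_div' m k
    · intro p hp
      simp only [mem_filter, mem_range, Finset.mem_product] at hp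
      obtain ⟨hq, hr, _⟩ := hp
      have h1 : (p.2 + p.1 * k) / k = p.1 := by
        rw [Nat.add_mul_div_right _ _ hk, Nat.div_eq_of_lt hr]; omega
      have h2 : (p.2 + p.1 * k) % k = p.2 := by
        rw [Nat.add_mul_mod_self_right, Nat.mod_eq_of_lt hr]
      simp [h1, h2]
  rw [key, Finset.card_product, Finset.card_range]

lemma natCard_comp_castHom (k N : ℕ) [NeZero k] [NeZero N] (h : k ∣ N) (P : ZMod k → Prop)
    [DecidablePred P] :
    Nat.card {t : ZMod N // P (ZMod.castHom h (ZMod k) t)}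
      = (N / k) * Nat.card {u : ZMod k // P u} := by
  classical
  rw [natCard_zmod_subtype, natCard_zmod_subtype]
  have hcast : ∀ m : ℕ, ZMod.castHom h (ZMod k) ((m : ZMod N)) = (m : ZMod k) :=
    fun m => map_natCast _ m
  simp only [hcast]
  exact count_mod_mul k N (Nat.pos_of_ne_zero (NeZero.ne k)) h P


/-- `s : ZMod N → V` is a closed path of length `N` in the directed graph `Γ`:
every consecutive pair of nodes is an edge of `Γ`. -/
def IsClosedPath {V : Type*} (Γ : V → V → Prop) (N : ℕ) (s : ZMod N → V) : Prop :=
  ∀ i : ZMod N, Γ (s i) (s (i + 1))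

/-- A simple cycle of length `k` in `Γ`: a closed path of positive length with
pairwise distinct nodes. -/
def IsSimpleCycle {V : Type*} (Γ : V → V → Prop) (k : ℕ) (c : ZMod k → V) : Prop :=
  0 < k ∧ IsClosedPath Γ k c ∧ Function.Injective c

/-- The weight matrix `W(s)` of `s : ZMod N → Fin n`: its `(i,j)` entry counts the
number of indices `k` with `(s k, s (k+1)) = (i, j)`. -/
noncomputable def weightMatrix {n : ℕ} (N : ℕ) (s : ZMod N → Fin n) :
    Matrix (Fin n) (Fin n) ℝ :=
  Matrix.of fun i j => (Nat.card {k : ZMod N // s k = i ∧ s (k + 1) = j} : ℝ)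

/-- The normalized closed path polytope `p_N(Γ)`: the convex hull of the normalized
weight matrices `w(s) = W(s)/N` of all closed paths of length `N` in `Γ`. -/
noncomputable def pathPolytope {n : ℕ} (Γ : Fin n → Fin n → Prop) (N : ℕ) :
    Set (Matrix (Fin n) (Fin n) ℝ) :=
  convexHull ℝ
    {M | ∃ s : ZMod N → Fin n, IsClosedPath Γ N s ∧ M = (N : ℝ)⁻¹ • weightMatrix N s}

/-- The normalized cycle polytope `p_*(Γ)`: the convex hull of the normalized weight
matrices `w(c) = W(c)/ℓ(c)` of all simple cycles of `Γ`. -/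
noncomputable def cyclePolytope {n : ℕ} (Γ : Fin n → Fin n → Prop) :
    Set (Matrix (Fin n) (Fin n) ℝ) :=
  convexHull ℝ
    {M | ∃ (k : ℕ) (c : ZMod k → Fin n), IsSimpleCycle Γ k c ∧
      M = (k : ℝ)⁻¹ • weightMatrix k c}

open Finset in
lemma weight_split {n : ℕ} (Γ : Fin n → Fin n → Prop) {N : ℕ} [NeZero N]
    (s : ZMod N → Fin n) (hs : IsClosedPath Γ N s) (i j : ZMod N)
    (hne : i ≠ j) (hij : s i = s j) :
    ∃ (a b : ℕ) (s₁ : ZMod a → Fin n) (s₂ : ZMod b → Fin n),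
      0 < a ∧ 0 < b ∧ a + b = N ∧ IsClosedPath Γ a s₁ ∧ IsClosedPath Γ b s₂ ∧
      weightMatrix N s = weightMatrix a s₁ + weightMatrix b s₂ := by
  classical
  set a : ℕ := (j - i).val with hadef
  have ha : 0 < a := ZMod.val_pos.mpr (sub_ne_zero.mpr (Ne.symm hne))
  have haN : a < N := ZMod.val_lt _
  set b : ℕ := N - a with hbdef
  have hb : 0 < b := by omega
  have hbN : b < N := by omega
  have hab : a + b = N := by omega
  haveI : NeZero a := ⟨ha.ne'⟩
  haveI : NeZero b := ⟨hb.ne'⟩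
  have hA : ((a : ℕ) : ZMod N) = j - i := ZMod.natCast_zmod_val (j - i)
  have hB : ((b : ℕ) : ZMod N) = i - j := by
    rw [hbdef, Nat.cast_sub haN.le, ZMod.natCast_self, hA]; ring
  set s₁ : ZMod a → Fin n := fun t => s (i + ((t.val : ℕ) : ZMod N)) with hs₁def
  set s₂ : ZMod b → Fin n := fun t => s (j + ((t.val : ℕ) : ZMod N)) with hs₂def
  have hval1 : ∀ t : ZMod a, (t + 1).val = (t.val + 1) % a := by
    intro t
    rw [ZMod.val_add, ZMod.val_one_eq_one_mod, Nat.add_mod t.val 1 a,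
      Nat.mod_eq_of_lt (ZMod.val_lt t)]
  have hval2 : ∀ t : ZMod b, (t + 1).val = (t.val + 1) % b := by
    intro t
    rw [ZMod.val_add, ZMod.val_one_eq_one_mod, Nat.add_mod t.val 1 b,
      Nat.mod_eq_of_lt (ZMod.val_lt t)]
  have hshift1 : ∀ t : ZMod a, s₁ (t + 1) = s (i + ((t.val : ℕ) : ZMod N) + 1) := by
    intro t
    rw [hs₁def]
    simp only []
    rw [hval1 t]
    rcases Nat.lt_or_ge (t.val + 1) a with hlt | hge
    · rw [Nat.mod_eq_of_lt hlt]
      congr 1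
      push_cast
      ring
    · have heq : t.val + 1 = a := by have := ZMod.val_lt t; omega
      rw [heq, Nat.mod_self]
      have h2 : (i : ZMod N) + ((t.val : ℕ) : ZMod N) + 1 = j := by
        have h3 : ((t.val + 1 : ℕ) : ZMod N) = ((a : ℕ) : ZMod N) := by rw [heq]
        push_cast at h3
        rw [add_assoc, h3, hA]
        ring
      rw [h2]
      simpa using hij
  have hshift2 : ∀ t : ZMod b, s₂ (t + 1) = s (j + ((t.val : ℕ) : ZMod N) + 1) := by
    intro t
    rw [hs₂def]
    simp only []
    rw [hval2 t]
    rcases Nat.lt_or_ge (t.val + 1) b with hlt | hge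
    · rw [Nat.mod_eq_of_lt hlt]
      congr 1
      push_cast
      ring
    · have heq : t.val + 1 = b := by have := ZMod.val_lt t; omega
      rw [heq, Nat.mod_self]
      have h2 : (j : ZMod N) + ((t.val : ℕ) : ZMod N) + 1 = i := by
        have h3 : ((t.val + 1 : ℕ) : ZMod N) = ((b : ℕ) : ZMod N) := by rw [heq]
        push_cast at h3
        rw [add_assoc, h3, hB]
        ring
      rw [h2]
      simpa using hij.symm
  have hc1 : IsClosedPath Γ a s₁ := by
    intro t
    rw [hshift1 t]
    exact hs (i + ((t.val : ℕ) : ZMod N))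
  have hc2 : IsClosedPath Γ b s₂ := by
    intro t
    rw [hshift2 t]
    exact hs (j + ((t.val : ℕ) : ZMod N))
  set f₁ : ZMod a → ZMod N := fun t => i + ((t.val : ℕ) : ZMod N) with hf₁def
  set f₂ : ZMod b → ZMod N := fun t => j + ((t.val : ℕ) : ZMod N) with hf₂def
  have hf1inj : Function.Injective f₁ := by
    intro t u h
    have h' : ((t.val : ℕ) : ZMod N) = ((u.val : ℕ) : ZMod N) := by
      rw [hf₁def] at h
      exact add_left_cancel h
    have := congrArg ZMod.val h'
    rw [ZMod.val_cast_of_lt (lt_trans (ZMod.val_lt t) haN),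
      ZMod.val_cast_of_lt (lt_trans (ZMod.val_lt u) haN)] at this
    exact ZMod.val_injective a this
  have hf2inj : Function.Injective f₂ := by
    intro t u h
    have h' : ((t.val : ℕ) : ZMod N) = ((u.val : ℕ) : ZMod N) := by
      rw [hf₂def] at h
      exact add_left_cancel h
    have := congrArg ZMod.val h'
    rw [ZMod.val_cast_of_lt (lt_trans (ZMod.val_lt t) hbN),
      ZMod.val_cast_of_lt (lt_trans (ZMod.val_lt u) hbN)] at this
    exact ZMod.val_injective b this
  have himg : (Finset.univ : Finset (ZMod N)) =
      Finset.univ.image f₁ ∪ Finset.univ.image f₂ := by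
    ext k0
    simp only [Finset.mem_univ, true_iff, Finset.mem_union, Finset.mem_image, true_and]
    have hD : (((k0 - i).val : ℕ) : ZMod N) = k0 - i := ZMod.natCast_zmod_val _
    by_cases hd : (k0 - i).val < a
    · left
      refine ⟨(((k0 - i).val : ℕ) : ZMod a), ?_⟩
      rw [hf₁def]
      simp only []
      rw [ZMod.val_cast_of_lt hd, hD]
      ring
    · right
      push_neg at hd
      have hdlt : (k0 - i).val < N := ZMod.val_lt _
      have helt : (k0 - i).val - a < b := by omega
      refine ⟨((((k0 - i).val - a : ℕ)) : ZMod b), ?_⟩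
      rw [hf₂def]
      simp only []
      rw [ZMod.val_cast_of_lt helt]
      have hAE : ((a : ℕ) : ZMod N) + (((k0 - i).val - a : ℕ) : ZMod N)
          = (((k0 - i).val : ℕ) : ZMod N) := by
        rw [← Nat.cast_add]
        congr 1
        omega
      linear_combination hAE + hD - hA
  have hdisj : Disjoint (Finset.univ.image f₁) (Finset.univ.image f₂) := by
    rw [Finset.disjoint_left]
    rintro k0 hk1 hk2
    simp only [Finset.mem_image, Finset.mem_univ, true_and] at hk1 hk2
    obtain ⟨t, ht⟩ := hk1
    obtain ⟨u, hu⟩ := hk2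
    have h' : (i : ZMod N) + ((t.val : ℕ) : ZMod N) = j + ((u.val : ℕ) : ZMod N) := by
      rw [hf₁def] at ht; rw [hf₂def] at hu
      exact ht.trans hu.symm
    have key : ((t.val : ℕ) : ZMod N) = ((a + u.val : ℕ) : ZMod N) := by
      push_cast
      linear_combination h' - hA
    have hvu : u.val < b := ZMod.val_lt u
    have hvt : t.val < a := ZMod.val_lt t
    have := congrArg ZMod.val key
    rw [ZMod.val_cast_of_lt (by omega), ZMod.val_cast_of_lt (by omega)] at this
    omega
  refine ⟨a, b, s₁, s₂, ha, hb, hab, hc1, hc2, ?_⟩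
  ext x y
  simp only [weightMatrix, Matrix.add_apply, Matrix.of_apply]
  rw [← Nat.cast_add]
  congr 1
  have hcard : ∀ (M : ℕ) [NeZero M] (g : ZMod M → Fin n),
      Nat.card {t : ZMod M // g t = x ∧ g (t + 1) = y}
        = (Finset.univ.filter fun t : ZMod M => g t = x ∧ g (t + 1) = y).card := by
    intro M _ g
    rw [Nat.card_eq_fintype_card, Fintype.card_subtype]
  rw [hcard N s, hcard a s₁, hcard b s₂]
  have hE1 : ∀ t : ZMod a, (s (f₁ t) = x ∧ s (f₁ t + 1) = y) ↔ (s₁ t = x ∧ s₁ (t + 1) = y) := by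
    intro t
    rw [hshift1 t, hs₁def, hf₁def]
  have hE2 : ∀ t : ZMod b, (s (f₂ t) = x ∧ s (f₂ t + 1) = y) ↔ (s₂ t = x ∧ s₂ (t + 1) = y) := by
    intro t
    rw [hshift2 t, hs₂def, hf₂def]
  calc (Finset.univ.filter fun t : ZMod N => s t = x ∧ s (t + 1) = y).card
      = (((Finset.univ.image f₁ ∪ Finset.univ.image f₂)).filter
          fun t : ZMod N => s t = x ∧ s (t + 1) = y).card := by rw [← himg]
    _ = ((Finset.univ.image f₁).filter fun t => s t = x ∧ s (t + 1) = y).card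
        + ((Finset.univ.image f₂).filter fun t => s t = x ∧ s (t + 1) = y).card := by
        rw [Finset.filter_union,
          Finset.card_union_of_disjoint (Finset.disjoint_filter_filter hdisj)]
    _ = (Finset.univ.filter fun t : ZMod a => s₁ t = x ∧ s₁ (t + 1) = y).card
        + (Finset.univ.filter fun t : ZMod b => s₂ t = x ∧ s₂ (t + 1) = y).card := by
        rw [Finset.filter_image, Finset.filter_image,
          Finset.card_image_of_injective _ hf1inj, Finset.card_image_of_injective _ hf2inj]
        congr 1
        · exact congrArg Finset.card (Finset.filter_congr fun t _ => hE1 t)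
        · exact congrArg Finset.card (Finset.filter_congr fun t _ => hE2 t)

lemma key_mem {n : ℕ} (Γ : Fin n → Fin n → Prop) :
    ∀ N : ℕ, 0 < N → ∀ s : ZMod N → Fin n, IsClosedPath Γ N s →
      (N : ℝ)⁻¹ • weightMatrix N s ∈ cyclePolytope Γ := by
  intro N
  induction N using Nat.strong_induction_on with
  | _ N ih =>
    intro hN s hs
    by_cases hinj : Function.Injective s
    · exact subset_convexHull ℝ _ ⟨N, s, ⟨hN, hs, hinj⟩, rfl⟩
    · obtain ⟨i, j, hij, hne⟩ : ∃ i j, s i = s j ∧ i ≠ j := by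
        simp only [Function.Injective, not_forall] at hinj
        obtain ⟨i, j, h1, h2⟩ := hinj
        exact ⟨i, j, h1, h2⟩
      haveI : NeZero N := ⟨hN.ne'⟩
      obtain ⟨a, b, s₁, s₂, ha, hb, hab, hc1, hc2, hW⟩ := weight_split Γ s hs i j hne hij
      have h1 := ih a (by omega) ha s₁ hc1
      have h2 := ih b (by omega) hb s₂ hc2
      have haR : (a : ℝ) ≠ 0 := Nat.cast_ne_zero.mpr ha.ne'
      have hbR : (b : ℝ) ≠ 0 := Nat.cast_ne_zero.mpr hb.ne'
      have hNR : (N : ℝ) ≠ 0 := Nat.cast_ne_zero.mpr hN.ne'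
      have hsum : (a : ℝ) / N + (b : ℝ) / N = 1 := by
        rw [← add_div, ← Nat.cast_add, hab, div_self hNR]
      have hmem := (convex_convexHull ℝ _) h1 h2
        (by positivity) (by positivity) hsum
      have e1 : ((a : ℝ) / N) • ((a : ℝ)⁻¹ • weightMatrix a s₁)
          = (N : ℝ)⁻¹ • weightMatrix a s₁ := by
        rw [smul_smul]
        congr 1
        field_simp
      have e2 : ((b : ℝ) / N) • ((b : ℝ)⁻¹ • weightMatrix b s₂)
          = (N : ℝ)⁻¹ • weightMatrix b s₂ := by
        rw [smul_smul]
        congr 1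
        field_simp
      rw [e1, e2] at hmem
      rwa [hW, smul_add]

/-- if `N ≥ 1` is divisible by the length of every simple cycle of `Γ`,
then the normalized closed path polytope `p_N(Γ)` equals the normalized cycle
polytope `p_*(Γ)`. -/
theorem pathPolytope_eq_cyclePolytope {n : ℕ} (Γ : Fin n → Fin n → Prop)
    (N : ℕ) (hN : 1 ≤ N)
    (hdiv : ∀ (k : ℕ) (c : ZMod k → Fin n), IsSimpleCycle Γ k c → k ∣ N) :
    pathPolytope Γ N = cyclePolytope Γ := by
  haveI : NeZero N := ⟨by omega⟩
  apply Set.Subset.antisymm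
  · apply convexHull_min _ (convex_convexHull ℝ _)
    rintro M ⟨s, hs, rfl⟩
    exact key_mem Γ N hN s hs
  · apply convexHull_min _ (convex_convexHull ℝ _)
    rintro M ⟨k, c, hc, rfl⟩
    have hk : k ∣ N := hdiv k c hc
    haveI : NeZero k := ⟨hc.1.ne'⟩
    set s : ZMod N → Fin n := fun t => c (ZMod.castHom hk (ZMod k) t) with hsdef
    have hclosed : IsClosedPath Γ N s := by
      intro t
      show Γ (c _) (c _)
      rw [map_add, map_one]
      exact hc.2.1 _
    have hkR : (k : ℝ) ≠ 0 := Nat.cast_ne_zero.mpr hc.1.ne'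
    have hNR : (N : ℝ) ≠ 0 := Nat.cast_ne_zero.mpr (by omega)
    have hWs : weightMatrix N s = ((N / k : ℕ) : ℝ) • weightMatrix k c := by
      ext x y
      simp only [weightMatrix, Matrix.smul_apply, Matrix.of_apply, smul_eq_mul]
      classical
      have hcongr : Nat.card {t : ZMod N // s t = x ∧ s (t + 1) = y}
          = Nat.card {t : ZMod N //
              (fun u => c u = x ∧ c (u + 1) = y) (ZMod.castHom hk (ZMod k) t)} := by
        apply Nat.card_congr
        apply Equiv.subtypeEquivRight
        intro t
        simp only [hsdef]
        rw [map_add, map_one]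
      rw [hcongr, natCard_comp_castHom k N hk (fun u => c u = x ∧ c (u + 1) = y), Nat.cast_mul]
    have hWeq : (k : ℝ)⁻¹ • weightMatrix k c = (N : ℝ)⁻¹ • weightMatrix N s := by
      rw [hWs, smul_smul, Nat.cast_div hk hkR]
      congr 1
      field_simp
    rw [hWeq]
    exact subset_convexHull ℝ _ ⟨s, hclosed, rfl⟩
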